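/- Let E = [0,1] × [0,1] and define f : E → ℝ² by f(x,z) = (0,1) if x = 1/2 and f(x,z) = (x,1) otherwise. Then: (i) the function y : [0,1] → E, y(t) = (1/2, t), is the unique solution of the initial value problem y' = f(y), y(0) = (1/2, 0) on [0,1] (any differentiable z : [0,1] → E with z(0) = (1/2,0) and z'(t) = f(z(t)) for all t equals y); (ii) f is bounded and solvable; and (iii) the set of discontinuity points of f on E is exactly the line segment {(1/2, z) : z ∈ [0,1]}. -/

import Mathlib

/-!
Uniqueness: the first coordinate `x` of a solution satisfies `x' = 0` where `x = 1/2` and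
`x' = x ≥ 0` elsewhere, so `x` is nondecreasing and `x ≥ 1/2`. Hence `x'` takes values only in
`{0} ∪ [1/2, 1]`, and starts at `0`; by Darboux's theorem a derivative cannot jump over `1/4`, so
`x ≡ 1/2`. Then `z' = (0, 1) = y'` and `z = y`.

Discontinuity: `f` is constant on the line `x = 1/2` and continuous off it, so `f ↾ K` is
discontinuous exactly at the points of `K` on the line that are limits of points of `K` off it,
a closed set whenever `K` is.
-/

open Set Filter Topology

noncomputable section

/-- The set of points of `A` at which the restriction `f ↾ A` (with the subspace
topology on `A`) is discontinuous. -/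
def discSet {X Y : Type*} [TopologicalSpace X] [TopologicalSpace Y]
    (f : X → Y) (A : Set X) : Set X :=
  {x | x ∈ A ∧ ¬ ContinuousWithinAt f A x}

/-- `f` is of Baire class one on `E`: it is the pointwise limit on `E` of a
sequence of functions continuous on `E`. -/
def BaireOne {X Y : Type*} [TopologicalSpace X] [TopologicalSpace Y]
    (f : X → Y) (E : Set X) : Prop :=
  ∃ g : ℕ → X → Y, (∀ n, ContinuousOn (g n) E) ∧
    ∀ x ∈ E, Tendsto (fun n => g n x) atTop (nhds (f x))

/-- `f` is solvable on `E`: it is of Baire class one and for every closed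
`K ⊆ E` the set of discontinuity points of `f ↾ K` is closed. -/
def SolvableOn {X Y : Type*} [TopologicalSpace X] [TopologicalSpace Y]
    (f : X → Y) (E : Set X) : Prop :=
  BaireOne f E ∧ ∀ K : Set X, K ⊆ E → IsClosed K → IsClosed (discSet f K)

/-- The transfinite sequence of `f`-removed sets on `E`:
`E_0 = E`, `E_{α+1} = discSet f E_α`, and `E_λ = ⋂_{β<λ} E_β` at limits. -/
def removedSets {X Y : Type*} [TopologicalSpace X] [TopologicalSpace Y]
    (f : X → Y) (E : Set X) (α : Ordinal.{0}) : Set X :=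
  Ordinal.limitRecOn α E (fun _ S => discSet f S)
    (fun o _ ih => ⋂ (β : Ordinal.{0}) (h : β < o), ih β h)

/-- `y` is differentiable on `[0,1]` with derivative `y'` (one-sided
derivatives at the endpoints). -/
def DiffOnIcc (y y' : ℝ → ℝ) : Prop :=
  ∀ x ∈ Set.Icc (0:ℝ) 1, HasDerivWithinAt y (y' x) (Set.Icc (0:ℝ) 1) x

/-- The solvable ranking: the least ordinal `α` for which the `α`-th
`y'`-removed set on `[0,1]` is empty. -/
def solvRank (y' : ℝ → ℝ) : Ordinal.{0} :=
  sInf {α : Ordinal.{0} | removedSets y' (Set.Icc (0:ℝ) 1) α = ∅}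


def E18 : Set (ℝ × ℝ) := Set.Icc (0:ℝ) 1 ×ˢ Set.Icc (0:ℝ) 1

def f18 : ℝ × ℝ → ℝ × ℝ := fun w => if w.1 = 1/2 then (0, 1) else (w.1, 1)

def y18 : ℝ → ℝ × ℝ := fun t => (1/2, t)

theorem eq_of_hasDerivWithinAt_of_deriv_gap {f f' : ℝ → ℝ} {a b c m : ℝ} (hm : 0 < m)
    (hf : ∀ t ∈ Icc a b, HasDerivWithinAt f (f' t) (Icc a b) t) (ha : f a = c)
    (hc : ∀ t ∈ Icc a b, f t = c → f' t = 0) (hgap : ∀ t ∈ Icc a b, f t ≠ c → m ≤ f' t) :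
    ∀ t ∈ Icc a b, f t = c := by
  by_contra! ⟨t, ht, hft⟩
  have hsub : Icc a t ⊆ Icc a b := Icc_subset_Icc_right ht.2
  have hf'a : f' a = 0 := hc a ⟨le_rfl, ht.1.trans ht.2⟩ ha
  obtain ⟨s, hs, hs'⟩ := exists_hasDerivWithinAt_eq_of_gt_of_lt (m := m / 2) ht.1
    (fun u hu => (hf u (hsub hu)).mono hsub) (by linarith) (by linarith [hgap t ht hft])
  have hsI : s ∈ Icc a b := hsub (Ioo_subset_Icc_self hs)
  by_cases hfs : f s = c
  · linarith [hc s hsI hfs]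
  · linarith [hgap s hsI hfs]

theorem eq_of_hasDerivWithinAt_Icc_eq {E : Type*} [NormedAddCommGroup E] [NormedSpace ℝ E]
    {f g f' : ℝ → E} {a b : ℝ}
    (hf : ∀ t ∈ Icc a b, HasDerivWithinAt f (f' t) (Icc a b) t)
    (hg : ∀ t ∈ Icc a b, HasDerivWithinAt g (f' t) (Icc a b) t) (ha : f a = g a) :
    ∀ t ∈ Icc a b, f t = g t :=
  eq_of_has_deriv_right_eq
    (fun t ht => (hf t (Ico_subset_Icc_self ht)).mono_of_mem_nhdsWithin (Icc_mem_nhdsGE_of_mem ht))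
    (fun t ht => (hg t (Ico_subset_Icc_self ht)).mono_of_mem_nhdsWithin (Icc_mem_nhdsGE_of_mem ht))
    (fun t ht => (hf t ht).continuousWithinAt) (fun t ht => (hg t ht).continuousWithinAt) ha

theorem continuousWithinAt_iff_notMem_closure_of_tendsto {X Y : Type*} [TopologicalSpace X]
    [TopologicalSpace Y] [T2Space Y] {f : X → Y} {s : Set X} {x : X} {y : Y} (hy : y ≠ f x)
    (hf : Tendsto f (𝓝[s] x) (𝓝 y)) : ContinuousWithinAt f s x ↔ x ∉ closure s := by
  refine ⟨fun hc hx => ?_, fun hx => ?_⟩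
  · have := mem_closure_iff_nhdsWithin_neBot.1 hx
    exact hy (tendsto_nhds_unique hf hc)
  · rw [ContinuousWithinAt, notMem_closure_iff_nhdsWithin_eq_bot.1 hx]
    exact tendsto_bot

lemma f18_of_fst_eq {w : ℝ × ℝ} (hw : w.1 = 1/2) : f18 w = (0, 1) := if_pos hw

lemma f18_of_fst_ne {w : ℝ × ℝ} (hw : w.1 ≠ 1/2) : f18 w = (w.1, 1) := if_neg hw

lemma fst_f18_nonneg {w : ℝ × ℝ} (hw : 0 ≤ w.1) : 0 ≤ (f18 w).1 := by
  unfold f18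
  split_ifs
  exacts [le_rfl, hw]

lemma norm_f18_le_one {w : ℝ × ℝ} (hw : w ∈ E18) : ‖f18 w‖ ≤ 1 := by
  unfold f18
  split_ifs
  · simp
  · simpa [Prod.norm_def, abs_le] using ⟨by linarith [hw.1.1], hw.1.2⟩

lemma continuousAt_f18 {w : ℝ × ℝ} (hw : w.1 ≠ 1/2) : ContinuousAt f18 w :=
  (continuous_fst.prodMk continuous_const).continuousAt.congr <|
    (continuousAt_fst.eventually_ne hw).mono fun _ hp => (f18_of_fst_ne hp).symm

lemma discSet_f18 (K : Set (ℝ × ℝ)) :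
    discSet f18 K = K ∩ {w | w.1 = 1/2} ∩ closure (K \ {w | w.1 = 1/2}) := by
  set L : Set (ℝ × ℝ) := {w | w.1 = 1/2}
  ext w
  simp only [discSet, mem_ofPred_eq, mem_inter_iff]
  by_cases hw : w.1 = 1/2
  swap
  · simp only [L, mem_ofPred_eq, hw, and_false, false_and, iff_false, not_and, not_not]
    exact fun _ => (continuousAt_f18 hw).continuousWithinAt
  have hline : ContinuousWithinAt f18 (K ∩ L) w :=
    continuousWithinAt_const.congr (fun p hp => f18_of_fst_eq hp.2) (f18_of_fst_eq hw)
  have hoff : Tendsto f18 (𝓝[K \ L] w) (𝓝 (w.1, 1)) :=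
    ((continuous_fst.prodMk continuous_const).tendsto w |>.mono_left nhdsWithin_le_nhds).congr'
      (eventually_nhdsWithin_of_forall fun p hp => (f18_of_fst_ne hp.2).symm)
  have hjump : (w.1, (1:ℝ)) ≠ f18 w := by
    rw [f18_of_fst_eq hw, hw]
    norm_num
  have hcont : ContinuousWithinAt f18 K w ↔ w ∉ closure (K \ L) :=
    calc ContinuousWithinAt f18 K w ↔ ContinuousWithinAt f18 (K ∩ L ∪ K \ L) w := by
          rw [inter_union_sdiff]
      _ ↔ ContinuousWithinAt f18 (K \ L) w := by rw [continuousWithinAt_union, and_iff_right hline]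
      _ ↔ w ∉ closure (K \ L) := continuousWithinAt_iff_notMem_closure_of_tendsto hjump hoff
  rw [hcont, not_not]
  exact ⟨fun ⟨hK, hcl⟩ => ⟨⟨hK, hw⟩, hcl⟩, fun ⟨⟨hK, _⟩, hcl⟩ => ⟨hK, hcl⟩⟩

lemma baireOne_f18 : BaireOne f18 E18 := by
  -- the cutoff `min 1 (n |x - 1/2|)` vanishes on the line and is `1` once `|x - 1/2| ≥ 1/n`
  refine ⟨fun n w => (w.1 * min 1 ((n:ℝ) * |w.1 - 1/2|), 1),
    fun n => Continuous.continuousOn (by fun_prop), fun w _ => ?_⟩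
  by_cases hw : w.1 = 1/2
  · simp [f18, hw]
  · have hd : 0 < |w.1 - 1/2| := abs_pos.2 (sub_ne_zero.2 hw)
    refine tendsto_const_nhds.congr' ?_
    filter_upwards [eventually_ge_atTop ⌈1 / |w.1 - 1/2|⌉₊] with n hn
    have : 1 ≤ (n:ℝ) * |w.1 - 1/2| := by
      rw [← div_le_iff₀ hd]
      exact (Nat.le_ceil _).trans (Nat.cast_le.2 hn)
    rw [f18_of_fst_ne hw, min_eq_left this, mul_one]

lemma isClosed_discSet_f18 {K : Set (ℝ × ℝ)} (hK : IsClosed K) : IsClosed (discSet f18 K) := by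
  rw [discSet_f18]
  exact (hK.inter (isClosed_eq continuous_fst continuous_const)).inter isClosed_closure

lemma discSet_f18_E18 : discSet f18 E18 = ({(1/2 : ℝ)} ×ˢ Icc (0:ℝ) 1 : Set (ℝ × ℝ)) := by
  have hline : E18 ∩ {w | w.1 = 1/2} = {(1/2 : ℝ)} ×ˢ Icc (0:ℝ) 1 := by
    ext ⟨a, b⟩
    simp only [E18, mem_inter_iff, mem_prod, mem_ofPred_eq, mem_singleton_iff]
    constructor
    · rintro ⟨⟨-, hb⟩, rfl⟩
      exact ⟨rfl, hb⟩
    · rintro ⟨rfl, hb⟩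
      exact ⟨⟨by norm_num, hb⟩, rfl⟩
  have hclosure : {(1/2 : ℝ)} ×ˢ Icc (0:ℝ) 1 ⊆ closure (E18 \ {w | w.1 = 1/2}) :=
    calc {(1/2 : ℝ)} ×ˢ Icc (0:ℝ) 1
        ⊆ closure (Ioc (1/2 : ℝ) 1) ×ˢ closure (Icc (0:ℝ) 1) := by
          rw [closure_Ioc (by norm_num), closure_Icc]
          exact prod_mono (by norm_num) le_rfl
      _ = closure (Ioc (1/2 : ℝ) 1 ×ˢ Icc (0:ℝ) 1) := closure_prod_eq.symm
      _ ⊆ closure (E18 \ {w | w.1 = 1/2}) := closure_mono fun w ⟨⟨h1, h2⟩, hb⟩ =>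
          ⟨⟨⟨by linarith, h2⟩, hb⟩, ne_of_gt h1⟩
  rw [discSet_f18, hline, inter_eq_left.2 hclosure]

lemma hasDerivAt_y18 (t : ℝ) : HasDerivAt y18 (0, 1) t :=
  (hasDerivAt_const t (1/2 : ℝ)).prodMk (hasDerivAt_id t)

lemma f18_y18 (t : ℝ) : f18 (y18 t) = (0, 1) := f18_of_fst_eq rfl

lemma eq_y18_of_isSolution (z : ℝ → ℝ × ℝ) (hmem : ∀ t ∈ Icc (0:ℝ) 1, z t ∈ E18)
    (h0 : z 0 = (1/2, 0))
    (hz : ∀ t ∈ Icc (0:ℝ) 1, HasDerivWithinAt z (f18 (z t)) (Icc (0:ℝ) 1) t) :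
    ∀ t ∈ Icc (0:ℝ) 1, z t = y18 t := by
  set x : ℝ → ℝ := fun t => (z t).1
  have hx : ∀ t ∈ Icc (0:ℝ) 1, HasDerivWithinAt x (f18 (z t)).1 (Icc (0:ℝ) 1) t :=
    fun t ht => (ContinuousLinearMap.fst ℝ ℝ ℝ).hasFDerivAt.comp_hasDerivWithinAt t (hz t ht)
  have hx0 : x 0 = 1/2 := by simp [x, h0]
  have hmono : MonotoneOn x (Icc 0 1) :=
    monotoneOn_of_hasDerivWithinAt_nonneg (convex_Icc 0 1)
      (fun t ht => (hx t ht).continuousWithinAt)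
      (fun t ht => (hx t (interior_subset ht)).mono interior_subset)
      (fun t ht => fst_f18_nonneg (hmem t (interior_subset ht)).1.1)
  have hfst : ∀ t ∈ Icc (0:ℝ) 1, x t = 1/2 :=
    eq_of_hasDerivWithinAt_of_deriv_gap one_half_pos hx hx0
      (fun t _ h => by rw [f18_of_fst_eq h])
      (fun t ht h => by
        rw [f18_of_fst_ne h, ← hx0]
        exact hmono ⟨le_rfl, zero_le_one⟩ ht ht.1)
  refine eq_of_hasDerivWithinAt_Icc_eq (fun t ht => ?_)
    (fun t _ => (hasDerivAt_y18 t).hasDerivWithinAt) h0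
  simpa only [f18_of_fst_eq (hfst t ht)] using hz t ht

theorem statement18 :
    ((∀ t ∈ Set.Icc (0:ℝ) 1, y18 t ∈ E18) ∧
      y18 0 = (1/2, 0) ∧
      (∀ t ∈ Set.Icc (0:ℝ) 1, HasDerivWithinAt y18 (f18 (y18 t)) (Set.Icc (0:ℝ) 1) t) ∧
      (∀ z : ℝ → ℝ × ℝ, (∀ t ∈ Set.Icc (0:ℝ) 1, z t ∈ E18) →
        z 0 = (1/2, 0) →
        (∀ t ∈ Set.Icc (0:ℝ) 1, HasDerivWithinAt z (f18 (z t)) (Set.Icc (0:ℝ) 1) t) →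
        ∀ t ∈ Set.Icc (0:ℝ) 1, z t = y18 t)) ∧
    ((∃ M : ℝ, ∀ w ∈ E18, ‖f18 w‖ ≤ M) ∧ SolvableOn f18 E18) ∧
    discSet f18 E18 = ({(1/2 : ℝ)} ×ˢ Set.Icc (0:ℝ) 1 : Set (ℝ × ℝ)) := by
  refine ⟨⟨fun t ht => ⟨by norm_num [y18], ht⟩, rfl, fun t _ => ?_, eq_y18_of_isSolution⟩,
    ⟨⟨1, fun w hw => norm_f18_le_one hw⟩, baireOne_f18, fun K _ hK => isClosed_discSet_f18 hK⟩,
    discSet_f18_E18⟩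
  rw [f18_y18]
  exact (hasDerivAt_y18 t).hasDerivWithinAt

end
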